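/- arXiv:1012.0925 — 4 statements merged into one kernel-verified Lean document; each statement's English description precedes it below -/
import Mathlib

section
/- Let n ≥ 2 and let d : Fin n → ℕ be a function with d(i) ≥ 1 for every i and ∑_{i} d(i) = 2n − 2. Then there exists a simple graph G on the vertex set Fin n which is a tree (connected and acyclic) such that the degree of vertex i in G equals d(i) for every i. -/
/-!
A sequence of `n ≥ 3` positive integers summing to `2n - 2` has an entry equal to `1` and an
entry at least `2`. Deleting the first and decrementing the second gives such a sequence of
length `n - 1`; a connected graph realizing it, with the deleted vertex attached as a leaf to the
decremented one, realizes the original sequence. Acyclicity comes for free: by the handshake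
lemma the graph has `n - 1` edges, and a connected graph on `n` vertices with `n - 1` edges is a
tree.
-/

open Finset

open scoped Classical

namespace SimpleGraph

variable {V : Type*}

def attachLeaf {i : V} (G : SimpleGraph {v // v ≠ i}) (j : V) : SimpleGraph V :=
  G.map (Function.Embedding.subtype _) ⊔ edge i j

section attachLeaf

variable {i j : V} {G : SimpleGraph {v // v ≠ i}}

lemma attachLeaf_adj {u w : V} : (attachLeaf G j).Adj u w ↔
    (∃ (hu : u ≠ i) (hw : w ≠ i), G.Adj ⟨u, hu⟩ ⟨w, hw⟩) ∨
      ((u = i ∧ w = j ∨ u = j ∧ w = i) ∧ u ≠ w) := by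
  rw [attachLeaf, sup_adj, map_adj, edge_adj]
  simp

lemma Connected.attachLeaf (hG : G.Connected) (hji : j ≠ i) : (attachLeaf G j).Connected := by
  rw [connected_iff_exists_forall_reachable]
  refine ⟨j, fun w => ?_⟩
  by_cases hwi : w = i
  · subst hwi
    exact Adj.reachable (attachLeaf_adj.mpr (Or.inr ⟨Or.inr ⟨rfl, rfl⟩, hji⟩))
  · exact ((hG.preconnected ⟨j, hji⟩ ⟨w, hwi⟩).map
      (Embedding.map (Function.Embedding.subtype _) G).toHom).mono le_sup_left

variable [Fintype V]

lemma degree_attachLeaf_self (hji : j ≠ i) : (attachLeaf G j).degree i = 1 := by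
  rw [← card_neighborFinset_eq_degree, card_eq_one]
  refine ⟨j, ?_⟩
  ext w
  simp only [mem_neighborFinset, attachLeaf_adj, mem_singleton]
  grind

lemma degree_attachLeaf_of_ne {v : V} (hvi : v ≠ i) :
    (attachLeaf G j).degree v = G.degree ⟨v, hvi⟩ + if v = j then 1 else 0 := by
  have hmap : (G.neighborFinset ⟨v, hvi⟩).map (Function.Embedding.subtype _) =
      ((attachLeaf G j).neighborFinset v).erase i := by
    ext w
    simp only [mem_map, mem_neighborFinset, Function.Embedding.subtype_apply, mem_erase,
      attachLeaf_adj]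
    grind
  rw [← card_neighborFinset_eq_degree, ← card_neighborFinset_eq_degree,
    ← card_map (Function.Embedding.subtype _), hmap]
  split_ifs with hvj
  · refine (card_erase_add_one ?_).symm
    rw [mem_neighborFinset, attachLeaf_adj]
    exact Or.inr ⟨Or.inr ⟨hvj, rfl⟩, hvi⟩
  · rw [erase_eq_of_notMem, add_zero]
    rw [mem_neighborFinset, attachLeaf_adj]
    grind

end attachLeaf

variable [Fintype V]

lemma Connected.isTree_of_sum_degree_eq {G : SimpleGraph V} (hG : G.Connected)
    (hsum : ∑ v, G.degree v = 2 * Fintype.card V - 2) : G.IsTree := by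
  have : 0 < Fintype.card V := Fintype.card_pos_iff.mpr hG.nonempty
  rw [sum_degrees_eq_twice_card_edges, edgeFinset_card] at hsum
  rw [isTree_iff_connected_and_card, Nat.card_eq_fintype_card, Nat.card_eq_fintype_card]
  exact ⟨hG, by omega⟩

end SimpleGraph

section TreelikeSequence

variable {V : Type*} {d : V → ℕ} {i j : V}

noncomputable def removeLeaf (d : V → ℕ) (i j : V) : {v // v ≠ i} → ℕ :=
  fun v => d v - if (v : V) = j then 1 else 0

lemma removeLeaf_add_ite (hj : 1 < d j) (v : {v // v ≠ i}) :
    removeLeaf d i j v + (if (v : V) = j then 1 else 0) = d v := by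
  rw [removeLeaf]
  split_ifs with hvj
  · have : 1 < d v := hvj ▸ hj
    omega
  · rfl

lemma one_le_removeLeaf (hpos : ∀ v, 1 ≤ d v) (hj : 1 < d j) (v : {v // v ≠ i}) :
    1 ≤ removeLeaf d i j v := by
  have := removeLeaf_add_ite hj v
  split_ifs at this with hvj
  · have : 1 < d v := hvj ▸ hj
    omega
  · have := hpos v
    omega

variable [Fintype V]

lemma sum_removeLeaf (hji : j ≠ i) (hj : 1 < d j) :
    ∑ v, removeLeaf d i j v + d i + 1 = ∑ v, d v := by
  have hone : ∑ v : {v // v ≠ i}, (if (v : V) = j then 1 else 0) = 1 := by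
    rw [Fintype.sum_eq_single ⟨j, hji⟩] <;> simp
  rw [Fintype.sum_eq_add_sum_subtype_ne d i, ← hone, add_right_comm, ← sum_add_distrib]
  simp only [removeLeaf_add_ite hj, add_comm]

lemma exists_eq_one_and_one_lt_of_sum_eq (hV : 3 ≤ Fintype.card V) (hpos : ∀ v, 1 ≤ d v)
    (hsum : ∑ v, d v = 2 * Fintype.card V - 2) : ∃ i j, d i = 1 ∧ 1 < d j := by
  obtain ⟨i, -, hi⟩ := exists_lt_of_sum_lt (s := univ) (f := d) (g := fun _ => 2)
    (by simp only [sum_const, card_univ, smul_eq_mul]; omega)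
  obtain ⟨j, -, hj⟩ := exists_lt_of_sum_lt (s := univ) (f := fun _ => 1) (g := d)
    (by simp only [sum_const, card_univ, smul_eq_mul, mul_one]; omega)
  exact ⟨i, j, by have := hpos i; omega, hj⟩

end TreelikeSequence

open SimpleGraph in
theorem exists_connected_degree_eq_of_sum_eq {V : Type*} [Fintype V] (hV : 2 ≤ Fintype.card V)
    (d : V → ℕ) (hpos : ∀ v, 1 ≤ d v) (hsum : ∑ v, d v = 2 * Fintype.card V - 2) :
    ∃ G : SimpleGraph V, G.Connected ∧ ∀ v, G.degree v = d v := by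
  obtain ⟨n, hn⟩ : ∃ n, Fintype.card V = n + 2 := ⟨_, (Nat.sub_add_cancel hV).symm⟩
  clear hV
  induction n generalizing V with
  | zero =>
    have hone : ∀ v, d v = 1 := by
      have := (sum_eq_sum_iff_of_le (s := univ) (f := fun _ => 1) fun v _ => hpos v).mp
        (by simp [hsum, hn])
      simpa [eq_comm] using this
    have : Nonempty V := Fintype.card_pos_iff.mp (by omega)
    refine ⟨⊤, connected_top, fun v => ?_⟩
    rw [hone, show 1 = Fintype.card V - 1 by omega]
    convert complete_graph_degree v
  | succ n ih =>
    obtain ⟨i, j, hi, hj⟩ := exists_eq_one_and_one_lt_of_sum_eq (by omega) hpos hsum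
    have hji : j ≠ i := by rintro rfl; omega
    have hcard : Fintype.card {v // v ≠ i} = n + 2 := by
      simp [Fintype.card_subtype_compl, hn]
    have hsum_removeLeaf := sum_removeLeaf hji hj
    obtain ⟨G, hconn, hdeg⟩ :=
      ih (removeLeaf d i j) (one_le_removeLeaf hpos hj) (by omega) hcard
    refine ⟨attachLeaf G j, hconn.attachLeaf hji, fun v => ?_⟩
    by_cases hvi : v = i
    · rw [hvi, degree_attachLeaf_self hji, hi]
    · rw [degree_attachLeaf_of_ne hvi, hdeg, removeLeaf_add_ite hj]

open scoped Classical in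
/-- Every tree-like sequence `d : Fin n → ℕ` (all entries positive, total sum
`2 * n - 2`, with `n ≥ 2`) is the degree sequence of some tree (connected
acyclic simple graph) on the vertex set `Fin n`. -/
theorem treelike_sequence_realizable_by_tree (n : ℕ) (hn : 2 ≤ n)
    (d : Fin n → ℕ) (hpos : ∀ i, 1 ≤ d i) (hsum : ∑ i, d i = 2 * n - 2) :
    ∃ G : SimpleGraph (Fin n), G.Connected ∧ G.IsAcyclic ∧
      ∀ i : Fin n, G.degree i = d i := by
  obtain ⟨G, hconn, hdeg⟩ :=
    exists_connected_degree_eq_of_sum_eq (by simpa using hn) d hpos (by simpa using hsum)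
  have htree := hconn.isTree_of_sum_degree_eq (by simpa [hdeg] using hsum)
  exact ⟨G, hconn, htree.isAcyclic, hdeg⟩
end

section
/- Let x_1 ≥ x_2 ≥ ⋯ ≥ x_n be a nonincreasing tree-like sequence of positive integers, and let p, q be positive integers such that p ≥ q > 1 and p + q = n + 1. Then there exist tree-like sequences of positive integers a_1, a_2, …, a_p and b_1, b_2, …, b_q such that a_1 + b_1 = x_1 and the multiset {a_2, a_3, …, a_p, b_2, b_3, …, b_q} equals the multiset {x_2, x_3, …, x_n}. -/
/-!
Take the tail of `b` to be a window `x (k + 2), …, x (k + q)` of `q - 1` consecutive terms, give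
the remaining terms of `x 2, …, x n` to `a`, and put `b 1 = 2q - 2 - W k` where `W k` is the
window sum, and `a 1 = x 1 - b 1`; both are positive iff `W k ≤ 2q - 3 < W k + x 1`.
Because `x` is nonincreasing and averages `(2n - 2)/n < 2`, its first `m < n` terms sum to at
least `2m - 1`; hence `x 1 + W 0 ≥ 2q - 1` while `W (p - 1) = x (p + 1) + ⋯ + x n ≤ 2q - 3`.
Sliding the window by one step lowers its sum by at most `x 1 - 1`, so some window hits the
range. The sum of `a` is then forced by the multiset identity.
-/

open Finset

def IsTreeLike (n : ℕ) (x : ℕ → ℕ) : Prop :=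
  (∀ i ∈ Icc 1 n, 1 ≤ x i) ∧ ∑ i ∈ Icc 1 n, x i = 2 * n - 2

namespace Nat

theorem val_Icc_add_val_Icc {a b c : ℕ} (hab : a ≤ b + 1) (hbc : b ≤ c) :
    (Icc a b).val + (Icc (b + 1) c).val = (Icc a c).val := by
  simpa only [Multiset.Ico, Finset.Ico_add_one_right_eq_Icc] using
    Multiset.Ico_add_Ico_eq_Ico (a := a) (b := b + 1) (c := c + 1) hab (by omega)

theorem map_val_Icc_add_right {α : Type*} (f : ℕ → α) (a b c : ℕ) :
    (Icc a b).val.map (fun i => f (i + c)) = (Icc (a + c) (b + c)).val.map f :=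
  (Multiset.map_map f (· + c) _).symm.trans
    (congrArg (Multiset.map f) (Multiset.map_add_right_Icc a b c))

theorem map_val_Icc_splice {α : Type*} (x : ℕ → α) {k w N : ℕ} (hk : k + 1 ≤ N) :
    (Icc 2 N).val.map (fun i => if i ≤ k + 1 then x i else x (i + w)) +
      (Icc 2 (w + 1)).val.map (fun i => x (i + k)) = (Icc 2 (N + w)).val.map x := by
  rw [← val_Icc_add_val_Icc (a := 2) (b := k + 1) (c := N) (by omega) hk, Multiset.map_add]
  have hleft : (Icc 2 (k + 1)).val.map (fun i => if i ≤ k + 1 then x i else x (i + w)) =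
      (Icc 2 (k + 1)).val.map x :=
    Multiset.map_congr rfl fun i hi => if_pos (mem_Icc.1 hi).2
  have hright : (Icc (k + 1 + 1) N).val.map (fun i => if i ≤ k + 1 then x i else x (i + w)) =
      (Icc (w + 1 + k + 1) (N + w)).val.map x := by
    rw [show w + 1 + k + 1 = k + 1 + 1 + w by omega, ← map_val_Icc_add_right]
    exact Multiset.map_congr rfl fun i hi =>
      if_neg (by rw [Finset.mem_val, mem_Icc] at hi; omega)
  rw [hleft, hright, map_val_Icc_add_right, add_right_comm, ← Multiset.map_add,
    ← Multiset.map_add, show 2 + k = k + 1 + 1 by omega,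
    val_Icc_add_val_Icc (by omega) (by omega), val_Icc_add_val_Icc (by omega) (by omega)]

theorem map_val_Icc_update_of_lt {α : Type*} (f : ℕ → α) {i a : ℕ} (b : ℕ) (v : α)
    (hi : i < a) : (Icc a b).val.map (Function.update f i v) = (Icc a b).val.map f :=
  Multiset.map_congr rfl fun j hj =>
    Function.update_of_ne (by rw [Finset.mem_val, mem_Icc] at hj; omega) v f

variable {M : Type*} [AddCommMonoid M]

theorem sum_Icc_add_sum_Icc (f : ℕ → M) {a b c : ℕ} (hab : a ≤ b + 1) (hbc : b ≤ c) :
    ∑ i ∈ Icc a b, f i + ∑ i ∈ Icc (b + 1) c, f i = ∑ i ∈ Icc a c, f i := by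
  simp only [Finset.sum_eq_multiset_sum, ← Multiset.sum_add, ← Multiset.map_add,
    val_Icc_add_val_Icc hab hbc]

theorem sum_Icc_eq_add_sum_Icc_succ (f : ℕ → M) {a b : ℕ} (hab : a ≤ b) :
    ∑ i ∈ Icc a b, f i = f a + ∑ i ∈ Icc (a + 1) b, f i := by
  rw [← sum_Icc_add_sum_Icc f (a := a) (b := a) (c := b) (by omega) hab, Icc_self,
    sum_singleton]

theorem sum_Icc_add_right (f : ℕ → M) (a b c : ℕ) :
    ∑ i ∈ Icc a b, f (i + c) = ∑ i ∈ Icc (a + c) (b + c), f i := by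
  simp only [Finset.sum_eq_multiset_sum, map_val_Icc_add_right]

theorem sum_Icc_add_eq_add_sum_Icc_succ (f : ℕ → M) {a b : ℕ} (hab : a ≤ b + 1) :
    ∑ i ∈ Icc a b, f i + f (b + 1) = f a + ∑ i ∈ Icc a b, f (i + 1) := by
  rw [← sum_Icc_succ_top hab, sum_Icc_eq_add_sum_Icc_succ f hab, sum_Icc_add_right]

end Nat

theorem nsmul_sum_Icc_succ_le_nsmul_sum_Icc {M : Type*} [AddCommMonoid M] [PartialOrder M]
    [IsOrderedAddMonoid M] {f : ℕ → M} {m n : ℕ} (hf : AntitoneOn f (Set.Icc 1 n))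
    (hmn : m ≤ n) :
    m • ∑ i ∈ Icc (m + 1) n, f i ≤ (n - m) • ∑ i ∈ Icc 1 m, f i := by
  rcases Nat.eq_zero_or_pos m with rfl | hm
  · simp
  have hfm : m ∈ Set.Icc 1 n := ⟨hm, hmn⟩
  have htail : ∑ i ∈ Icc (m + 1) n, f i ≤ (n - m) • f m := by
    refine (sum_le_card_nsmul _ _ _ fun i hi => ?_).trans_eq
      (by rw [Nat.card_Icc]; congr 1; omega)
    obtain ⟨him, hin⟩ := mem_Icc.1 hi
    exact hf hfm ⟨by omega, hin⟩ (by omega)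
  have hhead : m • f m ≤ ∑ i ∈ Icc 1 m, f i := by
    refine Eq.trans_le (by rw [Nat.card_Icc, Nat.add_sub_cancel])
      (card_nsmul_le_sum _ _ _ fun i hi => ?_)
    obtain ⟨hi1, him⟩ := mem_Icc.1 hi
    exact hf ⟨hi1, by omega⟩ hfm him
  calc m • ∑ i ∈ Icc (m + 1) n, f i ≤ m • ((n - m) • f m) := nsmul_le_nsmul_right htail m
    _ = (n - m) • (m • f m) := by rw [smul_comm]
    _ ≤ (n - m) • ∑ i ∈ Icc 1 m, f i := nsmul_le_nsmul_right hhead _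

theorem exists_lt_le_add_of_le_succ_add {α : Type*} [LinearOrder α] [Add α] {S : ℕ → α}
    {c t : α} {N : ℕ} (hstep : ∀ k < N, S k ≤ S (k + 1) + c) (h₀ : t ≤ S 0 + c)
    (hN : S N < t) : ∃ k ≤ N, S k < t ∧ t ≤ S k + c := by
  induction N with
  | zero => exact ⟨0, le_rfl, hN, h₀⟩
  | succ N ih =>
    by_cases hlt : S N < t
    · obtain ⟨k, hk, hk'⟩ := ih (fun k hk => hstep k (by omega)) hlt
      exact ⟨k, by omega, hk'⟩
    · exact ⟨N + 1, le_rfl, hN, (not_lt.1 hlt).trans (hstep N N.lt_succ_self)⟩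

namespace IsTreeLike

variable {n : ℕ} {x : ℕ → ℕ}

theorem two_mul_sub_one_le_sum_Icc (hx : IsTreeLike n x) (hanti : AntitoneOn x (Set.Icc 1 n))
    {m : ℕ} (hmn : m < n) : 2 * m - 1 ≤ ∑ i ∈ Icc 1 m, x i := by
  have havg := nsmul_sum_Icc_succ_le_nsmul_sum_Icc hanti hmn.le
  have htotal := Nat.sum_Icc_add_sum_Icc x (a := 1) (b := m) (c := n) (by omega) hmn.le
  rw [hx.2] at htotal
  simp only [smul_eq_mul] at havg
  generalize ∑ i ∈ Icc 1 m, x i = H at *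
  generalize ∑ i ∈ Icc (m + 1) n, x i = T at *
  obtain ⟨r, rfl⟩ : ∃ r, n = m + 1 + r := ⟨n - (m + 1), by omega⟩
  rw [show m + 1 + r - m = r + 1 by omega] at havg
  have hT : T + H = 2 * m + 2 * r := by omega
  by_contra! hlt
  have hH : H + 2 ≤ 2 * m := by omega
  -- `m (2n - 2) ≤ n H` by averaging, but `n H ≤ n (2m - 2) < m (2n - 2)`.
  nlinarith [Nat.mul_le_mul_left (m + r + 1) hH]

theorem exists_window_sum_lt_le_add (hx : IsTreeLike n x)
    (hanti : AntitoneOn x (Set.Icc 1 n)) {p q : ℕ} (hp : 1 < p) (hq : 1 < q) (hn : p + q = n + 1) :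
    ∃ k ≤ p - 1, ∑ i ∈ Icc 2 q, x (i + k) < 2 * q - 2 ∧
      2 * q - 2 ≤ ∑ i ∈ Icc 2 q, x (i + k) + (x 1 - 1) := by
  have hpos : ∀ i, 1 ≤ i → i ≤ n → 1 ≤ x i := fun i h₁ h₂ => hx.1 i (mem_Icc.2 ⟨h₁, h₂⟩)
  apply exists_lt_le_add_of_le_succ_add (S := fun k => ∑ i ∈ Icc 2 q, x (i + k))
  · intro k hk
    have hslide := Nat.sum_Icc_add_eq_add_sum_Icc_succ (fun i => x (i + k)) (a := 2) (b := q)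
      (by omega)
    simp only [add_assoc, add_comm 1 k] at hslide ⊢
    have := hanti ⟨le_rfl, by omega⟩ ⟨by omega, by omega⟩ (by omega : 1 ≤ 2 + k)
    have := hpos (q + (k + 1)) (by omega) (by omega)
    omega
  · have hhead := hx.two_mul_sub_one_le_sum_Icc hanti (m := q) (by omega)
    rw [Nat.sum_Icc_eq_add_sum_Icc_succ x (by omega)] at hhead
    have := hpos 1 le_rfl (by omega)
    simp only [Nat.reduceAdd, add_zero] at hhead ⊢
    omega
  · have hhead := hx.two_mul_sub_one_le_sum_Icc hanti (m := p) (by omega)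
    have htotal := Nat.sum_Icc_add_sum_Icc x (a := 1) (b := p) (c := n) (by omega) (by omega)
    rw [hx.2] at htotal
    simp only [Nat.sum_Icc_add_right, show 2 + (p - 1) = p + 1 by omega,
      show q + (p - 1) = n by omega]
    omega

theorem of_split {p q : ℕ} {a b : ℕ → ℕ} (hx : IsTreeLike n x) (hp : 1 ≤ p)
    (hq : 1 ≤ q) (hn : p + q = n + 1) (ha₁ : 1 ≤ a 1) (hb₁ : 1 ≤ b 1) (h₁ : a 1 + b 1 = x 1)
    (hsplit : (Icc 2 p).val.map a + (Icc 2 q).val.map b = (Icc 2 n).val.map x)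
    (hb : ∑ i ∈ Icc 1 q, b i = 2 * q - 2) :
    IsTreeLike p a ∧ IsTreeLike q b := by
  have hmem {y : ℕ} (hy : y ∈ (Icc 2 p).val.map a + (Icc 2 q).val.map b) : 1 ≤ y := by
    obtain ⟨j, hj, rfl⟩ := Multiset.mem_map.1 (hsplit ▸ hy)
    exact hx.1 j (Icc_subset_Icc_left one_le_two hj)
  have hpos {m : ℕ} {f : ℕ → ℕ} (hf₁ : 1 ≤ f 1)
      (hf : ∀ i ∈ Icc 2 m, f i ∈ (Icc 2 p).val.map a + (Icc 2 q).val.map b) :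
      ∀ i ∈ Icc 1 m, 1 ≤ f i := by
    intro i hi
    rcases (mem_Icc.1 hi).1.eq_or_lt with rfl | h
    · exact hf₁
    · exact hmem (hf i (mem_Icc.2 ⟨h, (mem_Icc.1 hi).2⟩))
  have hsum := congrArg Multiset.sum hsplit
  rw [Multiset.sum_add, ← Finset.sum_eq_multiset_sum, ← Finset.sum_eq_multiset_sum,
    ← Finset.sum_eq_multiset_sum] at hsum
  have hxsum := hx.2
  have hasum : ∑ i ∈ Icc 1 p, a i = 2 * p - 2 := by
    rw [Nat.sum_Icc_eq_add_sum_Icc_succ _ (by omega)] at hb hxsum ⊢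
    simp only [Nat.reduceAdd] at hb hxsum ⊢
    omega
  exact ⟨⟨hpos ha₁ fun i hi => Multiset.mem_add.2 (.inl (Multiset.mem_map_of_mem a hi)), hasum⟩,
    ⟨hpos hb₁ fun i hi => Multiset.mem_add.2 (.inr (Multiset.mem_map_of_mem b hi)), hb⟩⟩

end IsTreeLike

/-- Lemma 2. Let `x 1 ≥ x 2 ≥ ⋯ ≥ x n` be a nonincreasing tree-like sequence of
positive integers and let `p ≥ q > 1` with `p + q = n + 1`.  Then there exist
tree-like sequences of positive integers `a 1, …, a p` and `b 1, …, b q` such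
that `a 1 + b 1 = x 1` and the multiset `{a 2, …, a p, b 2, …, b q}` equals the
multiset `{x 2, …, x n}`. (All sequences are `1`-indexed.) -/
theorem lemma2_split_treelike (n p q : ℕ) (x : ℕ → ℕ)
    (hpos : ∀ i ∈ Finset.Icc 1 n, 1 ≤ x i)
    (hmono : ∀ i j : ℕ, 1 ≤ i → i ≤ j → j ≤ n → x j ≤ x i)
    (hsum : ∑ i ∈ Finset.Icc 1 n, x i = 2 * n - 2)
    (hq : 1 < q) (hpq : q ≤ p) (hn : p + q = n + 1) :
    ∃ a b : ℕ → ℕ,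
      (∀ i ∈ Finset.Icc 1 p, 1 ≤ a i) ∧
      (∑ i ∈ Finset.Icc 1 p, a i = 2 * p - 2) ∧
      (∀ i ∈ Finset.Icc 1 q, 1 ≤ b i) ∧
      (∑ i ∈ Finset.Icc 1 q, b i = 2 * q - 2) ∧
      a 1 + b 1 = x 1 ∧
      (Finset.Icc 2 p).val.map a + (Finset.Icc 2 q).val.map b
        = (Finset.Icc 2 n).val.map x := by
  have hx : IsTreeLike n x := ⟨hpos, hsum⟩
  have hanti : AntitoneOn x (Set.Icc 1 n) := fun i hi j hj hij => hmono i j hi.1 hij hj.2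
  obtain ⟨k, hk, hlt, hle⟩ := hx.exists_window_sum_lt_le_add hanti (by omega) hq hn
  set b₁ := 2 * q - 2 - ∑ i ∈ Icc 2 q, x (i + k)
  set a := Function.update (fun i => if i ≤ k + 1 then x i else x (i + (q - 1))) 1 (x 1 - b₁)
  set b := Function.update (fun i => x (i + k)) 1 b₁
  have h₁ : a 1 + b 1 = x 1 := by simp only [a, b, Function.update_self]; omega
  have hsplit : (Icc 2 p).val.map a + (Icc 2 q).val.map b = (Icc 2 n).val.map x := by
    rw [Nat.map_val_Icc_update_of_lt _ _ _ one_lt_two,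
      Nat.map_val_Icc_update_of_lt _ _ _ one_lt_two, ← show p + (q - 1) = n by omega,
      ← Nat.map_val_Icc_splice x (by omega : k + 1 ≤ p),
      Nat.sub_add_cancel hq.le]
  have hb : ∑ i ∈ Icc 1 q, b i = 2 * q - 2 := by
    rw [Nat.sum_Icc_eq_add_sum_Icc_succ _ hq.le, Finset.sum_eq_multiset_sum,
      Nat.map_val_Icc_update_of_lt _ _ _ (by omega), ← Finset.sum_eq_multiset_sum]
    simp only [b, Function.update_self, Nat.reduceAdd]
    omega
  obtain ⟨⟨ha_pos, ha_sum⟩, hb_pos, hb_sum⟩ := hx.of_split (by omega) hq.le hn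
    (by simp only [a, Function.update_self]; omega)
    (by simp only [b, Function.update_self]; omega) h₁ hsplit hb
  exact ⟨a, b, ha_pos, ha_sum, hb_pos, hb_sum, h₁, hsplit⟩
end

section
/- Let x_1 ≥ x_2 ≥ ⋯ ≥ x_n be a nonincreasing tree-like sequence of positive integers with n ≥ 3, let r be the number of indices i with x_i > 1, and for 1 ≤ s ≤ r set z_s = x_2 + x_3 + ⋯ + x_s (so z_1 = 0, the empty sum). Then for every integer p with 2 ≤ p ≤ n − 1 there exists s with 1 ≤ s ≤ r such that z_s − s + 3 ≤ p ≤ z_s − s + x_1 + 1. -/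
/-!
The lower ends `z s - s + 3` of the windows start at `2` for `s = 1` and grow by
`x (s + 1) - 1 ≤ x 1 - 1` from one `s` to the next, one more than the window width `x 1 - 2`;
so consecutive windows leave no gap. Since the entries past `r` all equal `1`, the tree-like
sum gives `x 1 + z r = n + r - 2`, i.e. the last window ends exactly at `n - 1`.
-/

open Finset

theorem Int.exists_between_of_step_le {f : ℕ → ℤ} {a b : ℕ} {p d : ℤ} (hab : a ≤ b)
    (hstep : ∀ k, a ≤ k → k < b → f (k + 1) ≤ f k + d + 1) (ha : f a ≤ p) (hb : p ≤ f b + d) :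
    ∃ s, a ≤ s ∧ s ≤ b ∧ f s ≤ p ∧ p ≤ f s + d := by
  induction b, hab using Nat.le_induction with
  | base => exact ⟨a, le_rfl, le_rfl, ha, hb⟩
  | succ b hab ih =>
    by_cases hfb : f (b + 1) ≤ p
    · exact ⟨b + 1, hab.trans b.le_succ, le_rfl, hfb, hb⟩
    · have hp : p ≤ f b + d := by linarith [hstep b hab b.lt_succ_self]
      obtain ⟨s, has, hsb, hs⟩ := ih (fun k hak hkb => hstep k hak (hkb.trans b.lt_succ_self)) hp
      exact ⟨s, has, hsb.trans b.le_succ, hs⟩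

section Antitone

variable {α : Type*} [LinearOrder α] {x : ℕ → α} {n : ℕ}

theorem AntitoneOn.lt_iff_le_card_filter (hx : AntitoneOn x (Set.Icc 1 n)) (c : α) {i : ℕ}
    (hi : i ∈ Icc 1 n) : c < x i ↔ i ≤ #((Icc 1 n).filter (c < x ·)) := by
  rw [mem_Icc] at hi
  constructor
  · intro hci
    have hsub : Icc 1 i ⊆ (Icc 1 n).filter (c < x ·) := by
      intro j hj
      rw [mem_Icc] at hj
      refine mem_filter.2 ⟨mem_Icc.2 ⟨hj.1, hj.2.trans hi.2⟩, hci.trans_le ?_⟩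
      exact hx ⟨hj.1, hj.2.trans hi.2⟩ hi hj.2
    simpa using card_le_card hsub
  · intro hir
    by_contra hci
    have hsub : (Icc 1 n).filter (c < x ·) ⊆ Icc 1 (i - 1) := by
      intro j hj
      obtain ⟨hj, hcj⟩ := mem_filter.1 hj
      rw [mem_Icc] at hj ⊢
      refine ⟨hj.1, Nat.le_sub_one_of_lt (lt_of_not_ge fun hij => hci ?_)⟩
      exact hcj.trans_le (hx hi hj hij)
    have := card_le_card hsub
    simp only [Nat.card_Icc] at this
    omega

theorem AntitoneOn.filter_lt_eq_Icc (hx : AntitoneOn x (Set.Icc 1 n)) (c : α) :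
    (Icc 1 n).filter (c < x ·) = Icc 1 #((Icc 1 n).filter (c < x ·)) := by
  have hrn : #((Icc 1 n).filter (c < x ·)) ≤ n := by
    simpa using card_filter_le (Icc 1 n) (c < x ·)
  ext i
  rw [mem_filter]
  constructor
  · rintro ⟨hi, hci⟩
    exact mem_Icc.2 ⟨(mem_Icc.1 hi).1, (hx.lt_iff_le_card_filter c hi).1 hci⟩
  · intro hi
    rw [mem_Icc] at hi
    have hi' : i ∈ Icc 1 n := mem_Icc.2 ⟨hi.1, hi.2.trans hrn⟩
    exact ⟨hi', (hx.lt_iff_le_card_filter c hi').2 hi.2⟩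

end Antitone

theorem AntitoneOn.sum_Icc_eq_sum_Icc_card_add {x : ℕ → ℤ} {n : ℕ}
    (hx : AntitoneOn x (Set.Icc 1 n)) (hpos : ∀ i ∈ Icc 1 n, 1 ≤ x i) :
    ∑ i ∈ Icc 1 n, x i = ∑ i ∈ Icc 1 #((Icc 1 n).filter (1 < x ·)), x i
      + ((n : ℤ) - #((Icc 1 n).filter (1 < x ·))) := by
  have hones : ∑ i ∈ (Icc 1 n).filter (¬ 1 < x ·), x i = #((Icc 1 n).filter (¬ 1 < x ·)) := by
    rw [sum_congr rfl fun i hi => ?_, sum_const, nsmul_one]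
    obtain ⟨hi, hxi⟩ := mem_filter.1 hi
    exact le_antisymm (not_lt.1 hxi) (hpos i hi)
  have hcard := card_filter_add_card_filter_not (s := Icc 1 n) (1 < x ·)
  rw [← sum_filter_add_sum_filter_not _ (1 < x ·), hones, ← hx.filter_lt_eq_Icc]
  simp only [Nat.card_Icc, add_tsub_cancel_right] at hcard
  omega

theorem lemma2_intermediate_value_general (n : ℕ) (x : ℕ → ℤ)
    (hpos : ∀ i ∈ Finset.Icc 1 n, 1 ≤ x i)
    (hmono : ∀ i j : ℕ, 1 ≤ i → i ≤ j → j ≤ n → x j ≤ x i)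
    (hsum : ∑ i ∈ Finset.Icc 1 n, x i = 2 * (n : ℤ) - 2)
    (r : ℕ) (hr : r = ((Finset.Icc 1 n).filter (fun i => 1 < x i)).card)
    (p : ℕ) (hp2 : 2 ≤ p) (hpn : p ≤ n - 1) :
    ∃ s : ℕ, 1 ≤ s ∧ s ≤ r ∧
      (∑ i ∈ Finset.Icc 2 s, x i) - s + 3 ≤ (p : ℤ) ∧
      (p : ℤ) ≤ (∑ i ∈ Finset.Icc 2 s, x i) - s + x 1 + 1 := by
  have hx : AntitoneOn x (Set.Icc 1 n) := fun i hi j hj hij => hmono i j hi.1 hij hj.2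
  have hsplit := hx.sum_Icc_eq_sum_Icc_card_add hpos
  rw [← hr, hsum] at hsplit
  have hr1 : 1 ≤ r := by
    by_contra! hr0
    rw [Nat.lt_one_iff.1 hr0, Icc_eq_empty (by omega), sum_empty] at hsplit
    omega
  have hrn : r ≤ n := by
    simpa [hr] using card_filter_le (Icc 1 n) (1 < x ·)
  rw [← add_sum_Ioc_eq_sum_Icc hr1, ← show Icc 2 r = Ioc 1 r from Icc_add_one_left_eq_Ioc 1 r]
    at hsplit
  obtain ⟨s, hs1, hsr, hs⟩ := Int.exists_between_of_step_le
    (f := fun s => ∑ i ∈ Icc 2 s, x i - s + 3) (p := p) (d := x 1 - 2) hr1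
    (fun k hk1 hkr => by
      have := hmono 1 (k + 1) le_rfl (by omega) (by omega)
      simp only [sum_Icc_succ_top (show 2 ≤ k + 1 by omega), Nat.cast_succ]
      linarith)
    (by simpa using hp2)
    (by omega)
  exact ⟨s, hs1, hsr, hs.1, by linarith [hs.2]⟩

/-- The discrete intermediate-value claim inside the proof of Lemma 2.
Let `x 1 ≥ x 2 ≥ ⋯ ≥ x n` be a nonincreasing tree-like sequence of positive
integers with `n ≥ 3`, let `r` be the number of indices `i` with `x i > 1`,
and let `z s = x 2 + ⋯ + x s`.  Then for every `p` with `2 ≤ p ≤ n - 1` there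
is an `s` with `1 ≤ s ≤ r` and `z s - s + 3 ≤ p ≤ z s - s + x 1 + 1`.
(Entries take values in `ℤ` so that the expressions `z s - s + 3` etc. are the
usual integer ones; sequences are `1`-indexed.) -/
theorem lemma2_intermediate_value (n : ℕ) (hn : 3 ≤ n) (x : ℕ → ℤ)
    (hpos : ∀ i ∈ Finset.Icc 1 n, 1 ≤ x i)
    (hmono : ∀ i j : ℕ, 1 ≤ i → i ≤ j → j ≤ n → x j ≤ x i)
    (hsum : ∑ i ∈ Finset.Icc 1 n, x i = 2 * (n : ℤ) - 2)
    (r : ℕ) (hr : r = ((Finset.Icc 1 n).filter (fun i => 1 < x i)).card)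
    (p : ℕ) (hp2 : 2 ≤ p) (hpn : p ≤ n - 1) :
    ∃ s : ℕ, 1 ≤ s ∧ s ≤ r ∧
      (∑ i ∈ Finset.Icc 2 s, x i) - s + 3 ≤ (p : ℤ) ∧
      (p : ℤ) ≤ (∑ i ∈ Finset.Icc 2 s, x i) - s + x 1 + 1 :=
  lemma2_intermediate_value_general n x hpos hmono hsum r hr p hp2 hpn
end

section
/- Let x_1 ≥ x_2 ≥ ⋯ ≥ x_n be a nonincreasing tree-like sequence of positive integers, let r be the number of indices i with x_i > 1, and set z_s = x_2 + ⋯ + x_s for 1 ≤ s ≤ r (with z_1 = 0). Fix integers p, q with p ≥ q > 1 and p + q = n + 1, and suppose s satisfies 1 ≤ s ≤ r and z_s − s + 3 ≤ p ≤ z_s − s + x_1 + 1. Define a_1 = p − (z_s − s + 3) + 1, a_i = x_i for 2 ≤ i ≤ s, and a_i = 1 for s + 1 ≤ i ≤ p; define b_1 = x_1 − a_1, b_i = x_{i+s−1} for 2 ≤ i ≤ r − s + 1, and b_i = 1 for r − s + 2 ≤ i ≤ q. Then 1 ≤ a_1 ≤ x_1 − 1, a_1 + a_2 + ⋯ + a_p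 = 2p − 2, and b_1 + b_2 + ⋯ + b_q = 2q − 2, i.e., (a_1, …, a_p) and (b_1, …, b_q) are tree-like sequences of positive integers. -/
/-!
Because `x` is nonincreasing, its entries greater than `1` are exactly `x 1, …, x r` and the
remaining `n - r` entries equal `1`, so `x 1 + z_s + (x (s+1) + ⋯ + x r) = n + r - 2`.
Both `a` and `b` are a head entry, a block of entries of `x`, and a tail of ones, so their sums
are explicit. The bounds on `p` give `1 ≤ a 1 ≤ x 1 - 1`, and since every `x i` with `i ≤ r` is
at least `2`, the sum of the block `x (s+1), …, x r` forces `r - s + 1 ≤ q`: the block fits in `b`.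
-/

open Finset

theorem sum_Icc_add_sum_Icc {M : Type*} [AddCommMonoid M] (f : ℕ → M) {a k b : ℕ}
    (hak : a ≤ k + 1) (hkb : k ≤ b) :
    ∑ i ∈ Icc a k, f i + ∑ i ∈ Icc (k + 1) b, f i = ∑ i ∈ Icc a b, f i := by
  rw [← sum_union (disjoint_left.2 fun i hi hi' => by simp at hi hi'; omega)]
  congr 1
  ext i; simp; omega

theorem sum_Icc_comp_add_sub {M : Type*} [AddCommMonoid M] (f : ℕ → M) (s m : ℕ) :
    ∑ i ∈ Icc 2 m, f (i + s - 1) = ∑ i ∈ Icc (s + 1) (m + s - 1), f i := by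
  apply sum_nbij' (· + s - 1) (· + 1 - s) <;> intro i hi <;> simp at hi ⊢ <;> omega

def headBlockOnes {M : Type*} [One M] (c : M) (g : ℕ → M) (m : ℕ) (i : ℕ) : M :=
  if i = 1 then c else if i ≤ m then g i else 1

section headBlockOnes

variable {M : Type*} (c : M) (g : ℕ → M) {m : ℕ}

theorem sum_Icc_headBlockOnes [AddCommMonoidWithOne M] {L : ℕ} (hm : 1 ≤ m) (hmL : m ≤ L) :
    ∑ i ∈ Icc 1 L, headBlockOnes c g m i = c + ∑ i ∈ Icc 2 m, g i + (L - m : ℕ) := by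
  have hblock : ∑ i ∈ Icc 2 m, headBlockOnes c g m i = ∑ i ∈ Icc 2 m, g i :=
    sum_congr rfl fun i hi => by
      simp only [mem_Icc] at hi
      simp only [headBlockOnes, if_neg (show i ≠ 1 by omega), if_pos hi.2]
  have hones : ∑ i ∈ Icc (m + 1) L, headBlockOnes c g m i = (L - m : ℕ) := by
    rw [sum_congr rfl fun i hi => show headBlockOnes c g m i = 1 by
      simp only [mem_Icc] at hi
      simp only [headBlockOnes, if_neg (show i ≠ 1 by omega), if_neg (show ¬i ≤ m by omega)]]
    simp
  have hhead : ∑ i ∈ Icc 1 1, headBlockOnes c g m i + ∑ i ∈ Icc 2 m, headBlockOnes c g m i =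
      ∑ i ∈ Icc 1 m, headBlockOnes c g m i := sum_Icc_add_sum_Icc _ le_add_self hm
  rw [← sum_Icc_add_sum_Icc _ le_add_self hmL, ← hhead, hblock, hones]
  simp [headBlockOnes]

theorem one_le_headBlockOnes [Preorder M] [One M] (hc : 1 ≤ c) (hg : ∀ i ∈ Icc 2 m, 1 ≤ g i)
    {i : ℕ} (hi : 1 ≤ i) : 1 ≤ headBlockOnes c g m i := by
  unfold headBlockOnes
  split_ifs with h1 h2
  · exact hc
  · exact hg i (mem_Icc.2 ⟨by omega, h2⟩)
  · exact le_rfl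

end headBlockOnes

theorem le_card_filter_Icc_iff {n : ℕ} {P : ℕ → Prop} [DecidablePred P]
    (hP : ∀ i j, 1 ≤ i → i ≤ j → j ≤ n → P j → P i) {i : ℕ} (hi : i ∈ Icc 1 n) :
    i ≤ #{j ∈ Icc 1 n | P j} ↔ P i := by
  rw [mem_Icc] at hi
  constructor
  · intro hle
    by_contra hPi
    have hsub : {j ∈ Icc 1 n | P j} ⊆ Icc 1 (i - 1) := fun j hj => by
      simp only [mem_filter, mem_Icc] at hj ⊢
      refine ⟨hj.1.1, ?_⟩
      by_contra hij
      exact hPi (hP i j hi.1 (by omega) hj.1.2 hj.2)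
    have := card_le_card hsub
    simp only [Nat.card_Icc] at this
    omega
  · intro hPi
    have hsub : Icc 1 i ⊆ {j ∈ Icc 1 n | P j} := fun j hj => by
      simp only [mem_filter, mem_Icc] at hj ⊢
      exact ⟨⟨hj.1, by omega⟩, hP j i hj.1 hj.2 hi.2 hPi⟩
    simpa using card_le_card hsub

section NonincreasingSequence

variable {n r : ℕ} {x : ℕ → ℤ}

theorem one_lt_iff_le_card (hmono : ∀ i j : ℕ, 1 ≤ i → i ≤ j → j ≤ n → x j ≤ x i)
    (hr : r = #{i ∈ Icc 1 n | 1 < x i}) {i : ℕ} (hi : i ∈ Icc 1 n) : 1 < x i ↔ i ≤ r :=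
  hr ▸ (le_card_filter_Icc_iff (P := fun j => 1 < x j)
    (fun i j hi hij hjn h => lt_of_lt_of_le h (hmono i j hi hij hjn)) hi).symm

theorem card_filter_one_lt_le (hr : r = #{i ∈ Icc 1 n | 1 < x i}) : r ≤ n :=
  hr ▸ (card_filter_le _ _).trans (by simp)

theorem two_le_of_mem_Icc_card (hmono : ∀ i j : ℕ, 1 ≤ i → i ≤ j → j ≤ n → x j ≤ x i)
    (hr : r = #{i ∈ Icc 1 n | 1 < x i}) {i : ℕ} (hi : i ∈ Icc 1 r) : 2 ≤ x i := by
  have hrn := card_filter_one_lt_le hr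
  simp only [mem_Icc] at hi
  have := (one_lt_iff_le_card hmono hr (mem_Icc.2 ⟨hi.1, by omega⟩)).2 hi.2
  omega

theorem two_mul_le_sum_Icc (hmono : ∀ i j : ℕ, 1 ≤ i → i ≤ j → j ≤ n → x j ≤ x i)
    (hr : r = #{i ∈ Icc 1 n | 1 < x i}) {k l : ℕ} (hk : 1 ≤ k) (hl : l ≤ r) :
    2 * ((l : ℤ) + 1 - k) ≤ ∑ i ∈ Icc k l, x i := by
  have := card_nsmul_le_sum (Icc k l) (fun i => x i) 2 fun i hi =>
    two_le_of_mem_Icc_card hmono hr (by simp only [mem_Icc] at hi ⊢; omega)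
  simp only [Nat.card_Icc, nsmul_eq_mul] at this
  omega

theorem sum_Icc_card_filter_one_lt (hpos : ∀ i ∈ Icc 1 n, 1 ≤ x i)
    (hmono : ∀ i j : ℕ, 1 ≤ i → i ≤ j → j ≤ n → x j ≤ x i)
    (hsum : ∑ i ∈ Icc 1 n, x i = 2 * (n : ℤ) - 2) (hr : r = #{i ∈ Icc 1 n | 1 < x i}) :
    ∑ i ∈ Icc 1 r, x i = n + r - 2 := by
  have hrn := card_filter_one_lt_le hr
  have htail : ∑ i ∈ Icc (r + 1) n, x i = (n - r : ℕ) := by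
    rw [sum_congr rfl fun i hi => show x i = 1 by
      have hi' : i ∈ Icc 1 n := by simp only [mem_Icc] at hi ⊢; omega
      have := (one_lt_iff_le_card hmono hr hi').not.2 (by simp only [mem_Icc] at hi; omega)
      linarith [hpos i hi']]
    simp
  have := sum_Icc_add_sum_Icc x (a := 1) (by omega) hrn
  rw [htail, hsum] at this
  push_cast [hrn] at this
  linarith

end NonincreasingSequence

theorem lemma2_explicit_construction_general (n p q r s : ℕ) (x : ℕ → ℤ)
    (hpos : ∀ i ∈ Finset.Icc 1 n, 1 ≤ x i)
    (hmono : ∀ i j : ℕ, 1 ≤ i → i ≤ j → j ≤ n → x j ≤ x i)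
    (hsum : ∑ i ∈ Finset.Icc 1 n, x i = 2 * (n : ℤ) - 2)
    (hr : r = ((Finset.Icc 1 n).filter (fun i => 1 < x i)).card)
    (hn : p + q = n + 1)
    (hs1 : 1 ≤ s) (hsr : s ≤ r)
    (hsp : (∑ i ∈ Finset.Icc 2 s, x i) - s + 3 ≤ (p : ℤ))
    (hps : (p : ℤ) ≤ (∑ i ∈ Finset.Icc 2 s, x i) - s + x 1 + 1)
    (a b : ℕ → ℤ)
    (ha : ∀ i : ℕ, a i =
      if i = 1 then (p : ℤ) - ((∑ j ∈ Finset.Icc 2 s, x j) - s + 3) + 1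
      else if i ≤ s then x i else 1)
    (hb : ∀ i : ℕ, b i =
      if i = 1 then x 1 - a 1
      else if i ≤ r - s + 1 then x (i + s - 1) else 1) :
    1 ≤ a 1 ∧ a 1 ≤ x 1 - 1 ∧
    (∑ i ∈ Finset.Icc 1 p, a i = 2 * (p : ℤ) - 2) ∧
    (∀ i ∈ Finset.Icc 1 p, 1 ≤ a i) ∧
    (∑ i ∈ Finset.Icc 1 q, b i = 2 * (q : ℤ) - 2) ∧
    (∀ i ∈ Finset.Icc 1 q, 1 ≤ b i) := by
  have hrn := card_filter_one_lt_le hr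
  set Z := ∑ i ∈ Icc 2 s, x i
  set T := ∑ i ∈ Icc (s + 1) r, x i
  have hxZT : x 1 + Z + T = n + r - 2 := by
    have hhead : ∑ i ∈ Icc 1 1, x i + Z = ∑ i ∈ Icc 1 s, x i := sum_Icc_add_sum_Icc x le_add_self hs1
    rw [← sum_Icc_card_filter_one_lt hpos hmono hsum hr, ← sum_Icc_add_sum_Icc x (by omega) hsr,
      ← hhead]
    simp [T]
  have hZ : 2 * ((s : ℤ) + 1 - 2) ≤ Z := two_mul_le_sum_Icc hmono hr one_le_two hsr
  have hT := two_mul_le_sum_Icc hmono hr (Nat.le_add_left 1 s) le_rfl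
  have ha1 : a 1 = p - (Z - s + 3) + 1 := by simp [ha]
  have hsp' : s ≤ p := by omega
  have hqr : r - s + 1 ≤ q := by push_cast at hT; omega
  have ha' : a = headBlockOnes (p - (Z - s + 3) + 1 : ℤ) x s := funext ha
  have hb' : b = headBlockOnes (x 1 - a 1) (fun i => x (i + s - 1)) (r - s + 1) := funext hb
  refine ⟨by linarith, by linarith, ?_, fun i hi => ?_, ?_, fun i hi => ?_⟩
  · rw [ha', sum_Icc_headBlockOnes _ _ hs1 hsp']
    push_cast [hsp']
    ring
  · rw [ha']
    exact one_le_headBlockOnes _ _ (by linarith)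
      (fun j hj => hpos j (by simp only [mem_Icc] at hj ⊢; omega)) (mem_Icc.1 hi).1
  · rw [hb', sum_Icc_headBlockOnes _ _ le_add_self hqr, sum_Icc_comp_add_sub,
      show r - s + 1 + s - 1 = r by omega]
    omega
  · rw [hb']
    exact one_le_headBlockOnes _ _ (by linarith)
      (fun j hj => hpos _ (by simp only [mem_Icc] at hj ⊢; omega)) (mem_Icc.1 hi).1

/-- The explicit construction in the proof of Lemma 2.  Let
`x 1 ≥ x 2 ≥ ⋯ ≥ x n` be a nonincreasing tree-like sequence of positive
integers, `r` the number of indices `i` with `x i > 1`,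
`z s = x 2 + ⋯ + x s`, and let `p ≥ q > 1` with `p + q = n + 1`.  Suppose
`1 ≤ s ≤ r` satisfies `z s - s + 3 ≤ p ≤ z s - s + x 1 + 1`.  Define
`a 1 = p - (z s - s + 3) + 1`, `a i = x i` for `2 ≤ i ≤ s`, `a i = 1` for
`s + 1 ≤ i ≤ p`; and `b 1 = x 1 - a 1`, `b i = x (i + s - 1)` for
`2 ≤ i ≤ r - s + 1`, `b i = 1` for `r - s + 2 ≤ i ≤ q`.  Then
`1 ≤ a 1 ≤ x 1 - 1` and `a`, `b` are tree-like sequences of positive integers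
of lengths `p` and `q`.  (Values are taken in `ℤ`; sequences are
`1`-indexed.) -/
theorem lemma2_explicit_construction (n p q r s : ℕ) (x : ℕ → ℤ)
    (hpos : ∀ i ∈ Finset.Icc 1 n, 1 ≤ x i)
    (hmono : ∀ i j : ℕ, 1 ≤ i → i ≤ j → j ≤ n → x j ≤ x i)
    (hsum : ∑ i ∈ Finset.Icc 1 n, x i = 2 * (n : ℤ) - 2)
    (hr : r = ((Finset.Icc 1 n).filter (fun i => 1 < x i)).card)
    (hq : 1 < q) (hpq : q ≤ p) (hn : p + q = n + 1)
    (hs1 : 1 ≤ s) (hsr : s ≤ r)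
    (hsp : (∑ i ∈ Finset.Icc 2 s, x i) - s + 3 ≤ (p : ℤ))
    (hps : (p : ℤ) ≤ (∑ i ∈ Finset.Icc 2 s, x i) - s + x 1 + 1)
    (a b : ℕ → ℤ)
    (ha : ∀ i : ℕ, a i =
      if i = 1 then (p : ℤ) - ((∑ j ∈ Finset.Icc 2 s, x j) - s + 3) + 1
      else if i ≤ s then x i else 1)
    (hb : ∀ i : ℕ, b i =
      if i = 1 then x 1 - a 1
      else if i ≤ r - s + 1 then x (i + s - 1) else 1) :
    1 ≤ a 1 ∧ a 1 ≤ x 1 - 1 ∧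
    (∑ i ∈ Finset.Icc 1 p, a i = 2 * (p : ℤ) - 2) ∧
    (∀ i ∈ Finset.Icc 1 p, 1 ≤ a i) ∧
    (∑ i ∈ Finset.Icc 1 q, b i = 2 * (q : ℤ) - 2) ∧
    (∀ i ∈ Finset.Icc 1 q, 1 ≤ b i) :=
  lemma2_explicit_construction_general n p q r s x hpos hmono hsum hr hn hs1 hsr hsp hps a b ha hb
end
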